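/- Uniqueness for the power-type ergodic MFG system: fix P ∈ ℝⁿ, α ≥ 0 and q > 0. If (u₁, m₁, H̄₁) and (u₂, m₂, H̄₂) are both classical solutions of the power-type ergodic MFG system with the same data (v, P, α, q), then H̄₁ = H̄₂, u₁ = u₂ and m₁ = m₂. -/

import Mathlib

open MeasureTheory Real

/-- Partial derivative in direction `i`. -/
noncomputable def pd {n : ℕ} (i : Fin n) (f : (Fin n → ℝ) → ℝ) (x : Fin n → ℝ) : ℝ :=
  fderiv ℝ f x (Pi.single i 1)

/-- Laplacian: sum of second partial derivatives. -/
noncomputable def lap {n : ℕ} (f : (Fin n → ℝ) → ℝ) (x : Fin n → ℝ) : ℝ :=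
  ∑ i, pd i (pd i f) x

/-- Divergence of a vector field. -/
noncomputable def dvg {n : ℕ} (F : (Fin n → ℝ) → Fin n → ℝ) (x : Fin n → ℝ) : ℝ :=
  ∑ i, pd i (fun y => F y i) x

/-- `ℤⁿ`-periodicity. -/
def ZPeriodic {n : ℕ} (f : (Fin n → ℝ) → ℝ) : Prop :=
  ∀ (k : Fin n → ℤ) (x : Fin n → ℝ), f (x + fun i => (k i : ℝ)) = f x

/-- The unit cube `Q = [0,1]ⁿ`. -/
def unitCube (n : ℕ) : Set (Fin n → ℝ) := Set.Icc 0 1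

/-- A classical solution `(u, m, H)` of the power-type ergodic MFG system
`-Δu + ½|∇u+P|² - v - αᑫ mᑫ = H`, `-Δm - div(m(∇u+P)) = 0`, `∫ u = 0`, `∫ m = 1`. -/
structure PowerMFG {n : ℕ} (v : (Fin n → ℝ) → ℝ) (P : Fin n → ℝ) (α q : ℝ)
    (u m : (Fin n → ℝ) → ℝ) (H : ℝ) : Prop where
  hu : ContDiff ℝ 2 u
  hm : ContDiff ℝ 2 m
  hup : ZPeriodic u
  hmp : ZPeriodic m
  hmpos : ∀ x, 0 < m x
  hHJB : ∀ x, -lap u x + (∑ i, (pd i u x + P i) ^ 2) / 2 - v x - α ^ q * (m x) ^ q = H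
  hFP : ∀ x, -lap m x - dvg (fun y j => m y * (pd j u y + P j)) x = 0
  humean : (∫ y in unitCube n, u y) = 0
  hmmean : (∫ y in unitCube n, m y) = 1

section Toolkit

variable {n : ℕ}

lemma pd_contDiff {f : (Fin n → ℝ) → ℝ} (hf : ContDiff ℝ 2 f) (i : Fin n) :
    ContDiff ℝ 1 (pd i f) :=
  (hf.fderiv_right (le_refl _)).clm_apply contDiff_const

lemma pd_add {f g : (Fin n → ℝ) → ℝ} {x : Fin n → ℝ} (hf : DifferentiableAt ℝ f x)
    (hg : DifferentiableAt ℝ g x) (i : Fin n) :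
    pd i (fun y => f y + g y) x = pd i f x + pd i g x := by
  simp [pd, fderiv_fun_add hf hg]

lemma pd_sub {f g : (Fin n → ℝ) → ℝ} {x : Fin n → ℝ} (hf : DifferentiableAt ℝ f x)
    (hg : DifferentiableAt ℝ g x) (i : Fin n) :
    pd i (fun y => f y - g y) x = pd i f x - pd i g x := by
  simp [pd, fderiv_fun_sub hf hg]

lemma pd_mul {f g : (Fin n → ℝ) → ℝ} {x : Fin n → ℝ} (hf : DifferentiableAt ℝ f x)
    (hg : DifferentiableAt ℝ g x) (i : Fin n) :
    pd i (fun y => f y * g y) x = f x * pd i g x + pd i f x * g x := by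
  simp [pd, fderiv_fun_mul hf hg, mul_comm]

lemma pd_add_const {f : (Fin n → ℝ) → ℝ} {x : Fin n → ℝ} (hf : DifferentiableAt ℝ f x)
    (c : ℝ) (i : Fin n) :
    pd i (fun y => f y + c) x = pd i f x := by
  simp [pd, fderiv_add_const]

lemma pd_const_mul {f : (Fin n → ℝ) → ℝ} {x : Fin n → ℝ} (hf : DifferentiableAt ℝ f x)
    (c : ℝ) (i : Fin n) :
    pd i (fun y => c * f y) x = c * pd i f x := by
  simp [pd, fderiv_const_mul hf]

lemma pd_periodic {f : (Fin n → ℝ) → ℝ} (hf : Differentiable ℝ f) (hper : ZPeriodic f)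
    (i : Fin n) : ZPeriodic (pd i f) := by
  intro k x
  have hg : (fun y : Fin n → ℝ => f (y + fun j => (k j : ℝ))) = f := funext fun y => hper k y
  have h1 : HasFDerivAt (fun y : Fin n → ℝ => f (y + fun j => (k j : ℝ)))
      (fderiv ℝ f (x + fun j => (k j : ℝ))) x :=
    (hf _).hasFDerivAt.comp x ((hasFDerivAt_id x).add_const _)
  rw [hg] at h1
  simp only [pd, h1.fderiv]

lemma cont_pd {f : (Fin n → ℝ) → ℝ} (hf : ContDiff ℝ 1 f) (i : Fin n) :
    Continuous (pd i f) :=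
  (hf.continuous_fderiv one_ne_zero).clm_apply continuous_const

lemma zp2 {f g : (Fin n → ℝ) → ℝ} (op : ℝ → ℝ → ℝ) (hf : ZPeriodic f) (hg : ZPeriodic g) :
    ZPeriodic (fun y => op (f y) (g y)) := fun k x => by simp only [hf k x, hg k x]

lemma zp1 {f : (Fin n → ℝ) → ℝ} (op : ℝ → ℝ) (hf : ZPeriodic f) :
    ZPeriodic (fun y => op (f y)) := fun k x => by simp only [hf k x]

lemma zp_sum {k : ℕ} {f : Fin k → (Fin n → ℝ) → ℝ} (hf : ∀ j, ZPeriodic (f j)) :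
    ZPeriodic (fun y => ∑ j, f j y) := fun c x =>
  Finset.sum_congr rfl fun j _ => hf j c x

/-- Integral of the divergence of a periodic `C¹` vector field over the unit cube vanishes. -/
lemma divergence_integral_zero {n : ℕ} (F : (Fin (n+1) → ℝ) → Fin (n+1) → ℝ)
    (hF : ∀ i, ContDiff ℝ 1 (fun y => F y i))
    (hFper : ∀ i, ZPeriodic (fun y => F y i)) :
    ∫ x in unitCube (n+1), dvg F x = 0 := by
  have key := MeasureTheory.integral_divergence_of_hasFDerivAt_off_countable'
    (0 : Fin (n+1) → ℝ) 1 (by intro i; norm_num)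
    (fun i y => F y i) (fun i x => fderiv ℝ (fun y => F y i) x) ∅ Set.countable_empty
    (fun i => (hF i).continuous.continuousOn)
    (fun x _ i => (((hF i).differentiable one_ne_zero) x).hasFDerivAt)
    ?_
  · have hface : ∀ (i : Fin (n+1)) (x : Fin n → ℝ),
        F (i.insertNth ((1 : Fin (n+1) → ℝ) i) x) i =
        F (i.insertNth ((0 : Fin (n+1) → ℝ) i) x) i := by
      intro i x
      have h1 : i.insertNth ((1 : Fin (n+1) → ℝ) i) x =
          i.insertNth ((0 : Fin (n+1) → ℝ) i) x + fun j => ((Pi.single i 1 : Fin (n+1) → ℤ) j : ℝ) := by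
        funext j
        rcases eq_or_ne j i with rfl | hj
        · simp
        · obtain ⟨k, hk⟩ := Fin.exists_succAbove_eq hj
          rw [← hk]
          simp [Fin.insertNth_apply_succAbove, Pi.single_eq_of_ne (Fin.succAbove_ne i k)]
      rw [h1]
      exact hFper i (Pi.single i 1) _
    rw [show unitCube (n+1) = Set.Icc (0 : Fin (n+1) → ℝ) 1 from rfl]
    rw [show (dvg F) = fun x => ∑ i, fderiv ℝ (fun y => F y i) x (Pi.single i 1) from rfl]
    rw [key, Finset.sum_eq_zero]
    intro i _
    rw [sub_eq_zero]
    exact integral_congr_ae (Filter.Eventually.of_forall fun x => hface i x)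
  · apply ContinuousOn.integrableOn_compact isCompact_Icc
    exact (continuous_finset_sum _ fun i _ =>
      ((hF i).continuous_fderiv one_ne_zero).clm_apply continuous_const).continuousOn

/-- A nonnegative continuous periodic function with vanishing integral over the unit cube
vanishes identically. -/
lemma periodic_nonneg_zero_integral {g : (Fin n → ℝ) → ℝ} (hc : Continuous g)
    (hper : ZPeriodic g) (h0 : ∀ x, 0 ≤ g x)
    (hint : ∫ x in unitCube n, g x = 0) : ∀ x, g x = 0 := by
  have hQ : MeasurableSet (unitCube n) := measurableSet_Icc
  have hInt : IntegrableOn g (unitCube n) :=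
    hc.continuousOn.integrableOn_compact isCompact_Icc
  have hae : g =ᵐ[volume.restrict (unitCube n)] 0 := by
    rw [← MeasureTheory.setIntegral_eq_zero_iff_of_nonneg_ae
      (Filter.Eventually.of_forall h0) hInt]
    exact hint
  have hmeas0 : volume ({x | g x ≠ 0} ∩ unitCube n) = 0 := by
    have h1 := (MeasureTheory.ae_restrict_iff' hQ).1 hae
    rw [ae_iff] at h1
    refine measure_mono_null ?_ h1
    intro x hx
    simp only [Set.mem_setOf_eq, Classical.not_imp]
    exact ⟨hx.2, hx.1⟩
  have hcover : {x : Fin n → ℝ | g x ≠ 0} ⊆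
      ⋃ k : Fin n → ℤ, (fun x => x - fun i => (k i : ℝ)) ⁻¹' ({x | g x ≠ 0} ∩ unitCube n) := by
    intro x hx
    refine Set.mem_iUnion.2 ⟨fun i => ⌊x i⌋, ?_⟩
    constructor
    · show g (x - fun i => (⌊x i⌋ : ℝ)) ≠ 0
      have : g ((x - fun i => (⌊x i⌋ : ℝ)) + fun i => ((⌊x i⌋ : ℤ) : ℝ)) = g (x - fun i => (⌊x i⌋:ℝ)) :=
        hper (fun i => ⌊x i⌋) _
      simpa [sub_add_cancel] using this ▸ (by simpa [sub_add_cancel] using hx)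
    · constructor
      · intro i
        simp only [Pi.sub_apply, Pi.zero_apply]
        exact sub_nonneg.2 (Int.floor_le (x i))
      · intro i
        simp only [Pi.sub_apply, Pi.one_apply]
        have := Int.lt_floor_add_one (x i)
        linarith
  have hglobal : volume {x : Fin n → ℝ | g x ≠ 0} = 0 := by
    refine measure_mono_null hcover (measure_iUnion_null fun k => ?_)
    have heq : (fun x : Fin n → ℝ => x - fun i => (k i : ℝ)) =
        (fun x : Fin n → ℝ => x + (-fun i => (k i : ℝ))) := by
      funext x; exact sub_eq_add_neg _ _
    rw [heq, measure_preimage_add_right volume _ _, hmeas0]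
  have : g =ᵐ[volume] 0 := by
    rw [Filter.EventuallyEq, ae_iff]
    simpa using hglobal
  intro x
  exact congrFun (hc.ae_eq_iff_eq (volume) continuous_const |>.1 this) x

lemma const_of_pd_zero {f : (Fin n → ℝ) → ℝ} (hf : Differentiable ℝ f)
    (h : ∀ i x, pd i f x = 0) : ∀ x y, f x = f y := by
  have hz : ∀ x, fderiv ℝ f x = 0 := by
    intro x
    ext v
    have hv : v = ∑ i, v i • (Pi.single i (1:ℝ) : Fin n → ℝ) := by
      funext j
      simp [Finset.sum_apply, Pi.single_apply]
    rw [ContinuousLinearMap.zero_apply]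
    conv_lhs => rw [hv]
    rw [map_sum]
    refine Finset.sum_eq_zero fun i _ => ?_
    rw [_root_.map_smul]
    have := h i x
    simp only [pd] at this
    rw [this, smul_zero]
  intro x y
  exact is_const_of_fderiv_eq_zero hf hz x y

lemma volume_unitCube : volume (unitCube n) = 1 := by
  rw [show unitCube n = Set.Icc (0 : Fin n → ℝ) 1 from rfl, Real.volume_Icc_pi]
  simp

end Toolkit
section Fields
variable {n : ℕ}
variable {u₁ u₂ m₁ m₂ : (Fin n → ℝ) → ℝ} {P : Fin n → ℝ}

/-- Derivative of the `j`-th component of the Lasry-Lions test field. -/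
lemma pd_LL_field (hu₁ : ContDiff ℝ 2 u₁) (hu₂ : ContDiff ℝ 2 u₂)
    (hm₁ : ContDiff ℝ 2 m₁) (hm₂ : ContDiff ℝ 2 m₂) (j : Fin n) (x : Fin n → ℝ) :
    pd j (fun y => (m₁ y - m₂ y) * (pd j u₁ y - pd j u₂ y)
      - (u₁ y - u₂ y) * (pd j m₁ y - pd j m₂ y)
      - (u₁ y - u₂ y) * (m₁ y * (pd j u₁ y + P j) - m₂ y * (pd j u₂ y + P j))) x
    = (m₁ x - m₂ x) * (pd j (pd j u₁) x - pd j (pd j u₂) x)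
      - (u₁ x - u₂ x) * (pd j (pd j m₁) x - pd j (pd j m₂) x)
      - (pd j u₁ x - pd j u₂ x) * (m₁ x * (pd j u₁ x + P j) - m₂ x * (pd j u₂ x + P j))
      - (u₁ x - u₂ x) *
        (pd j (fun y => m₁ y * (pd j u₁ y + P j)) x - pd j (fun y => m₂ y * (pd j u₂ y + P j)) x)
      := by
  have du₁ : DifferentiableAt ℝ u₁ x := (hu₁.differentiable two_ne_zero) x
  have du₂ : DifferentiableAt ℝ u₂ x := (hu₂.differentiable two_ne_zero) x
  have dm₁ : DifferentiableAt ℝ m₁ x := (hm₁.differentiable two_ne_zero) x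
  have dm₂ : DifferentiableAt ℝ m₂ x := (hm₂.differentiable two_ne_zero) x
  have hpd : ∀ (f : (Fin n → ℝ) → ℝ), ContDiff ℝ 2 f → ∀ i, ContDiff ℝ 1 (pd i f) := by
    intro f hf i
    exact (hf.fderiv_right (le_refl _)).clm_apply contDiff_const
  have dpu₁ : DifferentiableAt ℝ (pd j u₁) x := ((hpd u₁ hu₁ j).differentiable one_ne_zero) x
  have dpu₂ : DifferentiableAt ℝ (pd j u₂) x := ((hpd u₂ hu₂ j).differentiable one_ne_zero) x
  have dpm₁ : DifferentiableAt ℝ (pd j m₁) x := ((hpd m₁ hm₁ j).differentiable one_ne_zero) x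
  have dpm₂ : DifferentiableAt ℝ (pd j m₂) x := ((hpd m₂ hm₂ j).differentiable one_ne_zero) x
  have dw : DifferentiableAt ℝ (fun y => u₁ y - u₂ y) x := du₁.sub du₂
  have dmu : DifferentiableAt ℝ (fun y => m₁ y - m₂ y) x := dm₁.sub dm₂
  have dDw : DifferentiableAt ℝ (fun y => pd j u₁ y - pd j u₂ y) x := dpu₁.sub dpu₂
  have dDm : DifferentiableAt ℝ (fun y => pd j m₁ y - pd j m₂ y) x := dpm₁.sub dpm₂
  have da₁ : DifferentiableAt ℝ (fun y => pd j u₁ y + P j) x := dpu₁.add_const _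
  have da₂ : DifferentiableAt ℝ (fun y => pd j u₂ y + P j) x := dpu₂.add_const _
  have dG₁ : DifferentiableAt ℝ (fun y => m₁ y * (pd j u₁ y + P j)) x := dm₁.mul da₁
  have dG₂ : DifferentiableAt ℝ (fun y => m₂ y * (pd j u₂ y + P j)) x := dm₂.mul da₂
  have dG : DifferentiableAt ℝ
      (fun y => m₁ y * (pd j u₁ y + P j) - m₂ y * (pd j u₂ y + P j)) x := dG₁.sub dG₂
  rw [pd_sub ((dmu.fun_mul dDw).fun_sub (dw.fun_mul dDm)) (dw.fun_mul dG),
      pd_sub (dmu.fun_mul dDw) (dw.fun_mul dDm),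
      pd_mul dmu dDw, pd_mul dw dDm, pd_mul dw dG,
      pd_sub dm₁ dm₂, pd_sub du₁ du₂, pd_sub dpu₁ dpu₂, pd_sub dpm₁ dpm₂,
      pd_sub dG₁ dG₂]
  ring
end Fields
section Ratio
variable {n : ℕ}
variable {u m₁ m₂ : (Fin n → ℝ) → ℝ} {P : Fin n → ℝ}

lemma pd_ratio_field (hu : ContDiff ℝ 2 u)
    (hm₁ : ContDiff ℝ 2 m₁) (hm₂ : ContDiff ℝ 2 m₂) (hm₁ne : ∀ y, m₁ y ≠ 0)
    (j : Fin n) (x : Fin n → ℝ) :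
    pd j (fun y => (m₂ y / m₁ y) * (pd j m₂ y + m₂ y * (pd j u y + P j))
      - (1/2) * ((m₂ y / m₁ y) * (m₂ y / m₁ y))
          * (pd j m₁ y + m₁ y * (pd j u y + P j))) x
    = m₁ x * (pd j (fun y => m₂ y / m₁ y) x)^2
      + (m₂ x / m₁ x) * (pd j (pd j m₂) x + pd j (fun y => m₂ y * (pd j u y + P j)) x)
      - (1/2) * ((m₂ x / m₁ x) * (m₂ x / m₁ x))
          * (pd j (pd j m₁) x + pd j (fun y => m₁ y * (pd j u y + P j)) x) := by
  have hpd : ∀ (f : (Fin n → ℝ) → ℝ), ContDiff ℝ 2 f → ∀ i, ContDiff ℝ 1 (pd i f) :=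
    fun f hf i => (hf.fderiv_right (le_refl _)).clm_apply contDiff_const
  have du : DifferentiableAt ℝ u x := (hu.differentiable two_ne_zero) x
  have dm₁ : DifferentiableAt ℝ m₁ x := (hm₁.differentiable two_ne_zero) x
  have dm₂ : DifferentiableAt ℝ m₂ x := (hm₂.differentiable two_ne_zero) x
  have dpu : DifferentiableAt ℝ (pd j u) x := ((hpd u hu j).differentiable one_ne_zero) x
  have dpm₁ : DifferentiableAt ℝ (pd j m₁) x := ((hpd m₁ hm₁ j).differentiable one_ne_zero) x
  have dpm₂ : DifferentiableAt ℝ (pd j m₂) x := ((hpd m₂ hm₂ j).differentiable one_ne_zero) x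
  have dt : DifferentiableAt ℝ (fun y => m₂ y / m₁ y) x :=
    (((hm₂.of_le one_le_two).div (hm₁.of_le one_le_two) hm₁ne).differentiable one_ne_zero) x
  have da : DifferentiableAt ℝ (fun y => pd j u y + P j) x := dpu.add_const _
  have dF₁ : DifferentiableAt ℝ (fun y => m₁ y * (pd j u y + P j)) x := dm₁.mul da
  have dF₂ : DifferentiableAt ℝ (fun y => m₂ y * (pd j u y + P j)) x := dm₂.mul da
  have dJ₁ : DifferentiableAt ℝ (fun y => pd j m₁ y + m₁ y * (pd j u y + P j)) x := dpm₁.add dF₁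
  have dJ₂ : DifferentiableAt ℝ (fun y => pd j m₂ y + m₂ y * (pd j u y + P j)) x := dpm₂.add dF₂
  have dtt : DifferentiableAt ℝ (fun y => (m₂ y / m₁ y) * (m₂ y / m₁ y)) x := dt.mul dt
  -- key quotient identity: pd j m₂ = t * pd j m₁ + pd j t * m₁
  have hkey : pd j m₂ x = (m₂ x / m₁ x) * pd j m₁ x + pd j (fun y => m₂ y / m₁ y) x * m₁ x := by
    have h1 : pd j (fun y => (m₂ y / m₁ y) * m₁ y) x = pd j m₂ x := by
      apply congrFun (congrArg _ _)
      funext y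
      exact div_mul_cancel₀ _ (hm₁ne y)
    rw [← h1, pd_mul dt dm₁]
  rw [pd_sub (dt.fun_mul dJ₂) ((dtt.const_mul _).fun_mul dJ₁),
      pd_mul dt dJ₂, pd_mul (dtt.const_mul _) dJ₁,
      pd_const_mul dtt, pd_mul dt dt,
      pd_add dpm₂ dF₂, pd_add dpm₁ dF₁]
  have hm₂x : m₂ x = (m₂ x / m₁ x) * m₁ x := (div_mul_cancel₀ _ (hm₁ne x)).symm
  rw [hkey]
  nth_rewrite 2 [hm₂x]
  nth_rewrite 4 [hm₂x]
  field_simp [hm₁ne x]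
  ring
end Ratio
/-- Uniqueness for the power-type ergodic MFG system. -/
theorem power_mfg_uniqueness {n : ℕ} (hn : 1 ≤ n)
    (v : (Fin n → ℝ) → ℝ) (hv0 : ∀ x, 0 ≤ v x) (hvlip : ∃ K, LipschitzWith K v) (hvper : ZPeriodic v)
    (P : Fin n → ℝ) (α q : ℝ) (hα : 0 ≤ α) (hq : 0 < q)
    (u₁ m₁ u₂ m₂ : (Fin n → ℝ) → ℝ) (H₁ H₂ : ℝ)
    (h₁ : PowerMFG v P α q u₁ m₁ H₁) (h₂ : PowerMFG v P α q u₂ m₂ H₂) :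
    H₁ = H₂ ∧ u₁ = u₂ ∧ m₁ = m₂ := by
  obtain ⟨N, rfl⟩ : ∃ N, n = N + 1 := ⟨n - 1, (Nat.succ_pred_eq_of_pos hn).symm⟩
  clear hn hv0 hvlip
  obtain ⟨hu₁, hm₁, hu₁p, hm₁p, hm₁pos, hHJB₁, hFP₁, hu₁mean, hm₁mean⟩ := h₁
  obtain ⟨hu₂, hm₂, hu₂p, hm₂p, hm₂pos, hHJB₂, hFP₂, hu₂mean, hm₂mean⟩ := h₂
  have hu₁d : Differentiable ℝ u₁ := hu₁.differentiable two_ne_zero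
  have hu₂d : Differentiable ℝ u₂ := hu₂.differentiable two_ne_zero
  have hm₁d : Differentiable ℝ m₁ := hm₁.differentiable two_ne_zero
  have hm₂d : Differentiable ℝ m₂ := hm₂.differentiable two_ne_zero
  have hm₁c1 : ContDiff ℝ 1 m₁ := hm₁.of_le one_le_two
  have hm₂c1 : ContDiff ℝ 1 m₂ := hm₂.of_le one_le_two
  have hu₁c1 : ContDiff ℝ 1 u₁ := hu₁.of_le one_le_two
  have hu₂c1 : ContDiff ℝ 1 u₂ := hu₂.of_le one_le_two
  have hpu₁ : ∀ j, ContDiff ℝ 1 (pd j u₁) := pd_contDiff hu₁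
  have hpu₂ : ∀ j, ContDiff ℝ 1 (pd j u₂) := pd_contDiff hu₂
  have hpm₁ : ∀ j, ContDiff ℝ 1 (pd j m₁) := pd_contDiff hm₁
  have hpm₂ : ∀ j, ContDiff ℝ 1 (pd j m₂) := pd_contDiff hm₂
  have hpu₁p : ∀ j, ZPeriodic (pd j u₁) := fun j => pd_periodic hu₁d hu₁p j
  have hpu₂p : ∀ j, ZPeriodic (pd j u₂) := fun j => pd_periodic hu₂d hu₂p j
  have hpm₁p : ∀ j, ZPeriodic (pd j m₁) := fun j => pd_periodic hm₁d hm₁p j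
  have hpm₂p : ∀ j, ZPeriodic (pd j m₂) := fun j => pd_periodic hm₂d hm₂p j
  have hIntOn : ∀ (f : (Fin (N+1) → ℝ) → ℝ), Continuous f → IntegrableOn f (unitCube (N+1)) :=
    fun f hf => hf.continuousOn.integrableOn_compact isCompact_Icc
  -- ==================== STEP 1 : u₁ = u₂ ====================
  have hCV : ∀ i, ContDiff ℝ 1 (fun y =>
      (m₁ y - m₂ y) * (pd i u₁ y - pd i u₂ y)
      - (u₁ y - u₂ y) * (pd i m₁ y - pd i m₂ y)
      - (u₁ y - u₂ y) * (m₁ y * (pd i u₁ y + P i) - m₂ y * (pd i u₂ y + P i))) := by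
    intro i
    exact (((hm₁c1.sub hm₂c1).mul ((hpu₁ i).sub (hpu₂ i))).sub
      ((hu₁c1.sub hu₂c1).mul ((hpm₁ i).sub (hpm₂ i)))).sub
      ((hu₁c1.sub hu₂c1).mul ((hm₁c1.mul ((hpu₁ i).add contDiff_const)).sub
        (hm₂c1.mul ((hpu₂ i).add contDiff_const))))
  have hPV : ∀ i, ZPeriodic (fun y =>
      (m₁ y - m₂ y) * (pd i u₁ y - pd i u₂ y)
      - (u₁ y - u₂ y) * (pd i m₁ y - pd i m₂ y)
      - (u₁ y - u₂ y) * (m₁ y * (pd i u₁ y + P i) - m₂ y * (pd i u₂ y + P i))) := by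
    intro i k x
    simp only [hu₁p k x, hu₂p k x, hm₁p k x, hm₂p k x,
      hpu₁p i k x, hpu₂p i k x, hpm₁p i k x, hpm₂p i k x]
  have hdivV := divergence_integral_zero (fun y i =>
      (m₁ y - m₂ y) * (pd i u₁ y - pd i u₂ y)
      - (u₁ y - u₂ y) * (pd i m₁ y - pd i m₂ y)
      - (u₁ y - u₂ y) * (m₁ y * (pd i u₁ y + P i) - m₂ y * (pd i u₂ y + P i))) hCV hPV
  have hdvgV : ∀ x, dvg (fun y i =>
      (m₁ y - m₂ y) * (pd i u₁ y - pd i u₂ y)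
      - (u₁ y - u₂ y) * (pd i m₁ y - pd i m₂ y)
      - (u₁ y - u₂ y) * (m₁ y * (pd i u₁ y + P i) - m₂ y * (pd i u₂ y + P i))) x
      = -(α ^ q * ((m₁ x - m₂ x) * ((m₁ x) ^ q - (m₂ x) ^ q))
          + (m₁ x + m₂ x) / 2 * ∑ j, (pd j u₁ x - pd j u₂ x) ^ 2)
        - (H₁ - H₂) * (m₁ x - m₂ x) := by
    intro x
    have e₁ : lap u₁ x = (∑ i, (pd i u₁ x + P i) ^ 2) / 2 - v x - α ^ q * (m₁ x) ^ q - H₁ := by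
      linarith [hHJB₁ x]
    have e₂ : lap u₂ x = (∑ i, (pd i u₂ x + P i) ^ 2) / 2 - v x - α ^ q * (m₂ x) ^ q - H₂ := by
      linarith [hHJB₂ x]
    have f₁ : dvg (fun y j => m₁ y * (pd j u₁ y + P j)) x = -lap m₁ x := by linarith [hFP₁ x]
    have f₂ : dvg (fun y j => m₂ y * (pd j u₂ y + P j)) x = -lap m₂ x := by linarith [hFP₂ x]
    have hexp : dvg (fun y i =>
        (m₁ y - m₂ y) * (pd i u₁ y - pd i u₂ y)
        - (u₁ y - u₂ y) * (pd i m₁ y - pd i m₂ y)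
        - (u₁ y - u₂ y) * (m₁ y * (pd i u₁ y + P i) - m₂ y * (pd i u₂ y + P i))) x =
        (m₁ x - m₂ x) * (lap u₁ x - lap u₂ x)
        - (u₁ x - u₂ x) * (lap m₁ x - lap m₂ x)
        - (∑ j, (pd j u₁ x - pd j u₂ x) *
            (m₁ x * (pd j u₁ x + P j) - m₂ x * (pd j u₂ x + P j)))
        - (u₁ x - u₂ x) * (dvg (fun y j => m₁ y * (pd j u₁ y + P j)) x
            - dvg (fun y j => m₂ y * (pd j u₂ y + P j)) x) := by
      have hsum : ∀ j : Fin (N+1), pd j (fun y =>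
          (m₁ y - m₂ y) * (pd j u₁ y - pd j u₂ y)
          - (u₁ y - u₂ y) * (pd j m₁ y - pd j m₂ y)
          - (u₁ y - u₂ y) * (m₁ y * (pd j u₁ y + P j) - m₂ y * (pd j u₂ y + P j))) x
          = (m₁ x - m₂ x) * (pd j (pd j u₁) x - pd j (pd j u₂) x)
            - (u₁ x - u₂ x) * (pd j (pd j m₁) x - pd j (pd j m₂) x)
            - (pd j u₁ x - pd j u₂ x) * (m₁ x * (pd j u₁ x + P j) - m₂ x * (pd j u₂ x + P j))
            - (u₁ x - u₂ x) * (pd j (fun y => m₁ y * (pd j u₁ y + P j)) x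
                - pd j (fun y => m₂ y * (pd j u₂ y + P j)) x) :=
        fun j => pd_LL_field hu₁ hu₂ hm₁ hm₂ j x
      show (∑ j, pd j (fun y =>
          (m₁ y - m₂ y) * (pd j u₁ y - pd j u₂ y)
          - (u₁ y - u₂ y) * (pd j m₁ y - pd j m₂ y)
          - (u₁ y - u₂ y) * (m₁ y * (pd j u₁ y + P j) - m₂ y * (pd j u₂ y + P j))) x) = _
      rw [Finset.sum_congr rfl fun j _ => hsum j]
      simp only [lap, dvg, Finset.mul_sum, ← Finset.sum_sub_distrib]
      all_goals exact Finset.sum_congr rfl fun j _ => by ring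
    have hcross : (∑ j, (pd j u₁ x - pd j u₂ x) *
          (m₁ x * (pd j u₁ x + P j) - m₂ x * (pd j u₂ x + P j)))
        = (m₁ x - m₂ x) *
            ((∑ i, (pd i u₁ x + P i) ^ 2) / 2 - (∑ i, (pd i u₂ x + P i) ^ 2) / 2)
          + (m₁ x + m₂ x) / 2 * ∑ j, (pd j u₁ x - pd j u₂ x) ^ 2 := by
      have h1 : ∀ j ∈ Finset.univ, (pd j u₁ x - pd j u₂ x) *
            (m₁ x * (pd j u₁ x + P j) - m₂ x * (pd j u₂ x + P j))
          = (m₁ x - m₂ x) * (((pd j u₁ x + P j) ^ 2 / 2 - (pd j u₂ x + P j) ^ 2 / 2))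
            + (m₁ x + m₂ x) / 2 * (pd j u₁ x - pd j u₂ x) ^ 2 := fun j _ => by ring
      rw [Finset.sum_congr rfl h1, Finset.sum_add_distrib, ← Finset.mul_sum, ← Finset.mul_sum,
          Finset.sum_sub_distrib, ← Finset.sum_div, ← Finset.sum_div]
    rw [hexp, e₁, e₂, f₁, f₂, hcross]
    ring
  -- properties of the Lasry-Lions quantity
  have hcontV : Continuous (dvg (fun y i =>
      (m₁ y - m₂ y) * (pd i u₁ y - pd i u₂ y)
      - (u₁ y - u₂ y) * (pd i m₁ y - pd i m₂ y)
      - (u₁ y - u₂ y) * (m₁ y * (pd i u₁ y + P i) - m₂ y * (pd i u₂ y + P i)))) :=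
    continuous_finset_sum _ fun i _ => cont_pd (hCV i) i
  have hgeq : ∀ x, α ^ q * ((m₁ x - m₂ x) * ((m₁ x) ^ q - (m₂ x) ^ q))
      + (m₁ x + m₂ x) / 2 * ∑ j, (pd j u₁ x - pd j u₂ x) ^ 2
      = -dvg (fun y i =>
        (m₁ y - m₂ y) * (pd i u₁ y - pd i u₂ y)
        - (u₁ y - u₂ y) * (pd i m₁ y - pd i m₂ y)
        - (u₁ y - u₂ y) * (m₁ y * (pd i u₁ y + P i) - m₂ y * (pd i u₂ y + P i))) x
        - (H₁ - H₂) * (m₁ x - m₂ x) := by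
    intro x; rw [hdvgV x]; ring
  have hgcont : Continuous (fun x => α ^ q * ((m₁ x - m₂ x) * ((m₁ x) ^ q - (m₂ x) ^ q))
      + (m₁ x + m₂ x) / 2 * ∑ j, (pd j u₁ x - pd j u₂ x) ^ 2) := by
    rw [funext hgeq]
    exact hcontV.neg.sub (continuous_const.mul (hm₁.continuous.sub hm₂.continuous))
  have hgper : ZPeriodic (fun x => α ^ q * ((m₁ x - m₂ x) * ((m₁ x) ^ q - (m₂ x) ^ q))
      + (m₁ x + m₂ x) / 2 * ∑ j, (pd j u₁ x - pd j u₂ x) ^ 2) := by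
    intro k x
    simp only [hm₁p k x, hm₂p k x,
      show ∀ j : Fin (N+1), pd j u₁ (x + fun i => ((k i : ℤ) : ℝ)) = pd j u₁ x
        from fun j => hpu₁p j k x,
      show ∀ j : Fin (N+1), pd j u₂ (x + fun i => ((k i : ℤ) : ℝ)) = pd j u₂ x
        from fun j => hpu₂p j k x]
  have hgnonneg : ∀ x, 0 ≤ α ^ q * ((m₁ x - m₂ x) * ((m₁ x) ^ q - (m₂ x) ^ q))
      + (m₁ x + m₂ x) / 2 * ∑ j, (pd j u₁ x - pd j u₂ x) ^ 2 := by
    intro x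
    have hterm1 : 0 ≤ (m₁ x - m₂ x) * ((m₁ x) ^ q - (m₂ x) ^ q) := by
      rcases le_total (m₁ x) (m₂ x) with h | h
      · have : (m₁ x) ^ q ≤ (m₂ x) ^ q :=
          Real.rpow_le_rpow (le_of_lt (hm₁pos x)) h (le_of_lt hq)
        nlinarith
      · have : (m₂ x) ^ q ≤ (m₁ x) ^ q :=
          Real.rpow_le_rpow (le_of_lt (hm₂pos x)) h (le_of_lt hq)
        exact mul_nonneg (by linarith) (by linarith)
    have hterm2 : (0:ℝ) ≤ (m₁ x + m₂ x) / 2 := by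
      have := hm₁pos x; have := hm₂pos x; linarith
    exact add_nonneg (mul_nonneg (Real.rpow_nonneg hα q) hterm1)
      (mul_nonneg hterm2 (Finset.sum_nonneg fun j _ => sq_nonneg _))
  have hgint : ∫ x in unitCube (N+1), (α ^ q * ((m₁ x - m₂ x) * ((m₁ x) ^ q - (m₂ x) ^ q))
      + (m₁ x + m₂ x) / 2 * ∑ j, (pd j u₁ x - pd j u₂ x) ^ 2) = 0 := by
    rw [integral_congr_ae (Filter.Eventually.of_forall fun x => hgeq x)]
    rw [integral_sub (hIntOn _ hcontV.neg : IntegrableOn (fun x => -dvg _ x) (unitCube (N+1)) volume)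
      (hIntOn _ (continuous_const.mul (hm₁.continuous.sub hm₂.continuous)) :
        IntegrableOn (fun x => (H₁ - H₂) * (m₁ x - m₂ x)) (unitCube (N+1)) volume)]
    rw [integral_neg, hdivV, MeasureTheory.integral_const_mul,
      integral_sub (hIntOn _ hm₁.continuous) (hIntOn _ hm₂.continuous),
      hm₁mean, hm₂mean]
    ring
  have hgzero := periodic_nonneg_zero_integral hgcont hgper hgnonneg hgint
  have hpdw : ∀ (j : Fin (N+1)) x, pd j u₁ x - pd j u₂ x = 0 := by
    intro j x
    have h1 := hgzero x
    have hterm1 : 0 ≤ α ^ q * ((m₁ x - m₂ x) * ((m₁ x) ^ q - (m₂ x) ^ q)) := by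
      rcases le_total (m₁ x) (m₂ x) with h | h
      · have h2 := Real.rpow_le_rpow (le_of_lt (hm₁pos x)) h (le_of_lt hq)
        exact mul_nonneg (Real.rpow_nonneg hα q) (by nlinarith)
      · exact mul_nonneg (Real.rpow_nonneg hα q) (mul_nonneg (by linarith)
          (by linarith [Real.rpow_le_rpow (le_of_lt (hm₂pos x)) h (le_of_lt hq)]))
    have hsumnn : 0 ≤ ∑ j, (pd j u₁ x - pd j u₂ x) ^ 2 :=
      Finset.sum_nonneg fun j _ => sq_nonneg _
    have hpos : 0 < (m₁ x + m₂ x) / 2 := by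
      have := hm₁pos x; have := hm₂pos x; linarith
    have hzero2 : ∑ j, (pd j u₁ x - pd j u₂ x) ^ 2 = 0 := by
      nlinarith
    have := (Finset.sum_eq_zero_iff_of_nonneg fun j _ => sq_nonneg _).mp hzero2 j
      (Finset.mem_univ j)
    exact pow_eq_zero_iff two_ne_zero |>.mp this
  have huw : u₁ = u₂ := by
    have hwd : Differentiable ℝ (fun y => u₁ y - u₂ y) := hu₁d.sub hu₂d
    have hwpd : ∀ (i : Fin (N+1)) x, pd i (fun y => u₁ y - u₂ y) x = 0 := fun i x => by
      rw [pd_sub (hu₁d x) (hu₂d x)]; exact hpdw i x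
    have hconst := const_of_pd_zero hwd hwpd
    have hmean : ∫ y in unitCube (N+1), (u₁ y - u₂ y) = 0 := by
      rw [integral_sub (hIntOn _ hu₁.continuous) (hIntOn _ hu₂.continuous),
        hu₁mean, hu₂mean, sub_zero]
    have hval : ∀ x, u₁ x - u₂ x = u₁ 0 - u₂ 0 := fun x => hconst x 0
    have hconstint : ∫ y in unitCube (N+1), (u₁ y - u₂ y) = u₁ 0 - u₂ 0 := by
      rw [integral_congr_ae (Filter.Eventually.of_forall fun y => hval y),
        setIntegral_const, measureReal_def, volume_unitCube]
      simp
    have hzero : u₁ 0 - u₂ 0 = 0 := by rw [← hconstint]; exact hmean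
    funext x
    have := hval x
    rw [hzero] at this
    linarith
  subst huw
  -- ==================== STEP 2 : m₁ = m₂ ====================
  have hm₁ne : ∀ y, m₁ y ≠ 0 := fun y => ne_of_gt (hm₁pos y)
  have htC : ContDiff ℝ 1 (fun y => m₂ y / m₁ y) := hm₂c1.div hm₁c1 hm₁ne
  have htd : Differentiable ℝ (fun y => m₂ y / m₁ y) := htC.differentiable one_ne_zero
  have htper : ZPeriodic (fun y => m₂ y / m₁ y) := by
    intro k x; simp only [hm₁p k x, hm₂p k x]
  have htpdper : ∀ j, ZPeriodic (pd j (fun y => m₂ y / m₁ y)) :=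
    fun j => pd_periodic htd htper j
  have htpdC : ∀ j, Continuous (pd j (fun y => m₂ y / m₁ y)) := fun j => cont_pd htC j
  have hCW : ∀ i, ContDiff ℝ 1 (fun y =>
      (m₂ y / m₁ y) * (pd i m₂ y + m₂ y * (pd i u₁ y + P i))
      - (1/2) * ((m₂ y / m₁ y) * (m₂ y / m₁ y))
          * (pd i m₁ y + m₁ y * (pd i u₁ y + P i))) := by
    intro i
    exact (htC.mul ((hpm₂ i).add (hm₂c1.mul ((hpu₁ i).add contDiff_const)))).sub
      ((contDiff_const.mul (htC.mul htC)).mul ((hpm₁ i).add (hm₁c1.mul ((hpu₁ i).add contDiff_const))))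
  have hPW : ∀ i, ZPeriodic (fun y =>
      (m₂ y / m₁ y) * (pd i m₂ y + m₂ y * (pd i u₁ y + P i))
      - (1/2) * ((m₂ y / m₁ y) * (m₂ y / m₁ y))
          * (pd i m₁ y + m₁ y * (pd i u₁ y + P i))) := by
    intro i k x
    simp only [hu₁p k x, hm₁p k x, hm₂p k x, hpu₁p i k x, hpm₁p i k x, hpm₂p i k x]
  have hdivW := divergence_integral_zero (fun y i =>
      (m₂ y / m₁ y) * (pd i m₂ y + m₂ y * (pd i u₁ y + P i))
      - (1/2) * ((m₂ y / m₁ y) * (m₂ y / m₁ y))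
          * (pd i m₁ y + m₁ y * (pd i u₁ y + P i))) hCW hPW
  have hdvgW : ∀ x, dvg (fun y i =>
      (m₂ y / m₁ y) * (pd i m₂ y + m₂ y * (pd i u₁ y + P i))
      - (1/2) * ((m₂ y / m₁ y) * (m₂ y / m₁ y))
          * (pd i m₁ y + m₁ y * (pd i u₁ y + P i))) x
      = m₁ x * ∑ j, (pd j (fun y => m₂ y / m₁ y) x) ^ 2 := by
    intro x
    have hsum : ∀ j : Fin (N+1), pd j (fun y =>
        (m₂ y / m₁ y) * (pd j m₂ y + m₂ y * (pd j u₁ y + P j))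
        - (1/2) * ((m₂ y / m₁ y) * (m₂ y / m₁ y))
            * (pd j m₁ y + m₁ y * (pd j u₁ y + P j))) x
        = m₁ x * (pd j (fun y => m₂ y / m₁ y) x) ^ 2
          + (m₂ x / m₁ x) * (pd j (pd j m₂) x + pd j (fun y => m₂ y * (pd j u₁ y + P j)) x)
          - (1/2) * ((m₂ x / m₁ x) * (m₂ x / m₁ x))
              * (pd j (pd j m₁) x + pd j (fun y => m₁ y * (pd j u₁ y + P j)) x) :=
      fun j => pd_ratio_field hu₁ hm₁ hm₂ hm₁ne j x
    have f₁ : lap m₁ x + dvg (fun y j => m₁ y * (pd j u₁ y + P j)) x = 0 := by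
      linarith [hFP₁ x]
    have f₂ : lap m₂ x + dvg (fun y j => m₂ y * (pd j u₁ y + P j)) x = 0 := by
      linarith [hFP₂ x]
    have hexp : dvg (fun y i =>
        (m₂ y / m₁ y) * (pd i m₂ y + m₂ y * (pd i u₁ y + P i))
        - (1/2) * ((m₂ y / m₁ y) * (m₂ y / m₁ y))
            * (pd i m₁ y + m₁ y * (pd i u₁ y + P i))) x
        = m₁ x * ∑ j, (pd j (fun y => m₂ y / m₁ y) x) ^ 2
          + (m₂ x / m₁ x) * (lap m₂ x + dvg (fun y j => m₂ y * (pd j u₁ y + P j)) x)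
          - (1/2) * ((m₂ x / m₁ x) * (m₂ x / m₁ x))
              * (lap m₁ x + dvg (fun y j => m₁ y * (pd j u₁ y + P j)) x) := by
      show (∑ j, pd j (fun y =>
          (m₂ y / m₁ y) * (pd j m₂ y + m₂ y * (pd j u₁ y + P j))
          - (1/2) * ((m₂ y / m₁ y) * (m₂ y / m₁ y))
              * (pd j m₁ y + m₁ y * (pd j u₁ y + P j))) x) = _
      rw [Finset.sum_congr rfl fun j _ => hsum j]
      simp only [lap, dvg, Finset.mul_sum, ← Finset.sum_sub_distrib, ← Finset.sum_add_distrib]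
      all_goals exact Finset.sum_congr rfl fun j _ => by ring
    rw [hexp, f₁, f₂]
    ring
  have hg2cont : Continuous (fun x => m₁ x * ∑ j, (pd j (fun y => m₂ y / m₁ y) x) ^ 2) :=
    hm₁.continuous.mul (continuous_finset_sum _ fun j _ => (htpdC j).pow 2)
  have hg2per : ZPeriodic (fun x => m₁ x * ∑ j, (pd j (fun y => m₂ y / m₁ y) x) ^ 2) := by
    intro k x
    simp only [hm₁p k x,
      show ∀ j : Fin (N+1), pd j (fun y => m₂ y / m₁ y) (x + fun i => ((k i : ℤ) : ℝ))
          = pd j (fun y => m₂ y / m₁ y) x from fun j => htpdper j k x]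
  have hg2nonneg : ∀ x, 0 ≤ m₁ x * ∑ j, (pd j (fun y => m₂ y / m₁ y) x) ^ 2 := fun x =>
    mul_nonneg (le_of_lt (hm₁pos x)) (Finset.sum_nonneg fun j _ => sq_nonneg _)
  have hg2int : ∫ x in unitCube (N+1),
      (m₁ x * ∑ j, (pd j (fun y => m₂ y / m₁ y) x) ^ 2) = 0 := by
    rw [integral_congr_ae (Filter.Eventually.of_forall fun x => (hdvgW x).symm)]
    exact hdivW
  have hg2zero := periodic_nonneg_zero_integral hg2cont hg2per hg2nonneg hg2int
  have htpd0 : ∀ (j : Fin (N+1)) x, pd j (fun y => m₂ y / m₁ y) x = 0 := by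
    intro j x
    have h1 := hg2zero x
    have hz : ∑ j, (pd j (fun y => m₂ y / m₁ y) x) ^ 2 = 0 :=
      (mul_eq_zero.mp h1).resolve_left (hm₁ne x)
    have := (Finset.sum_eq_zero_iff_of_nonneg fun j _ => sq_nonneg _).mp hz j (Finset.mem_univ j)
    exact pow_eq_zero_iff two_ne_zero |>.mp this
  have htconst := const_of_pd_zero htd htpd0
  have htval : ∀ x, m₂ x / m₁ x = m₂ 0 / m₁ 0 := fun x => htconst x 0
  have hc1 : m₂ 0 / m₁ 0 = 1 := by
    have hint : ∫ y in unitCube (N+1), m₂ y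
        = ∫ y in unitCube (N+1), (m₂ 0 / m₁ 0) * m₁ y := by
      refine integral_congr_ae (Filter.Eventually.of_forall fun y => ?_)
      show m₂ y = m₂ 0 / m₁ 0 * m₁ y
      rw [← htval y, div_mul_cancel₀ _ (hm₁ne y)]
    rw [hm₂mean, MeasureTheory.integral_const_mul, hm₁mean, mul_one] at hint
    exact hint.symm
  have hmeq : m₁ = m₂ := by
    funext x
    have hx := htval x
    rw [hc1, div_eq_one_iff_eq (hm₁ne x)] at hx
    exact hx.symm
  subst hmeq
  exact ⟨(hHJB₁ 0).symm.trans (hHJB₂ 0), rfl, rfl⟩
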